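/- arXiv:1604.00627 — 2 statements merged into one kernel-verified Lean document; each statement's English description precedes it below -/
import Mathlib

section
/- Let M ≥ 1 and let α_i, ν_i, μ_i ∈ [0,1] with α_i + ν_i ≤ 1 for all i = 1,…,M. Define α = α_1 + α_2(1-α_1-ν_1) + … + α_M ∏_{i=1}^{M-1}(1-α_i-ν_i), ν = ν_1 + ν_2(1-α_1-ν_1) + … + ν_M ∏_{i=1}^{M-1}(1-α_i-ν_i), and μ by 1-μ = ∏_{i=1}^{M}(1-μ_i). Then the sequential-choice death probability satisfies ν(1-μ) ≤ ν_1 + ν_2(1-α_1-ν_1)(1-μ_1) + … + ν_M ∏_{i=1}^{M-1}(1-α_i-ν_i)(1-μ_i) ≤ ν. -/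
open Finset

/-- Sandwich bound for the interleaved (sequential-choice) death probability:
`ν(1-μ) ≤ ∑ ν_j ∏_{i<j}(1-α_i-ν_i)(1-μ_i) ≤ ν`, where
`ν = ∑ ν_j ∏_{i<j}(1-α_i-ν_i)` and `1-μ = ∏_{i<M}(1-μ_i)`. -/
theorem stmt0 (M : ℕ) (hM : 1 ≤ M) (α ν μ : ℕ → ℝ)
    (hα : ∀ i, 0 ≤ α i ∧ α i ≤ 1) (hν : ∀ i, 0 ≤ ν i ∧ ν i ≤ 1)
    (hμ : ∀ i, 0 ≤ μ i ∧ μ i ≤ 1) (hαν : ∀ i, α i + ν i ≤ 1) :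
    (∑ j ∈ range M, ν j * ∏ i ∈ range j, (1 - α i - ν i)) *
        (∏ i ∈ range M, (1 - μ i)) ≤
      ∑ j ∈ range M, ν j * ∏ i ∈ range j, (1 - α i - ν i) * (1 - μ i) ∧
    ∑ j ∈ range M, ν j * ∏ i ∈ range j, (1 - α i - ν i) * (1 - μ i) ≤
      ∑ j ∈ range M, ν j * ∏ i ∈ range j, (1 - α i - ν i) := by
  have hq : ∀ i, 0 ≤ 1 - α i - ν i := fun i => by
    have := hαν i; linarith
  have hm : ∀ i, 0 ≤ 1 - μ i := fun i => by have := (hμ i).2; linarith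
  have hm1 : ∀ i, 1 - μ i ≤ 1 := fun i => by have := (hμ i).1; linarith
  have hPq : ∀ j, (0:ℝ) ≤ ∏ i ∈ range j, (1 - α i - ν i) :=
    fun j => prod_nonneg (fun i _ => hq i)
  have hPm : ∀ s : Finset ℕ, (0:ℝ) ≤ ∏ i ∈ s, (1 - μ i) :=
    fun s => prod_nonneg (fun i _ => hm i)
  constructor
  · rw [Finset.sum_mul]
    apply Finset.sum_le_sum
    intro j hj
    have hjM : j ≤ M := le_of_lt (mem_range.mp hj)
    have hsplit : (∏ i ∈ range M, (1 - μ i)) ≤ ∏ i ∈ range j, (1 - μ i) := by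
      rw [← Finset.prod_range_mul_prod_Ico _ hjM]
      have h1 : (∏ i ∈ Ico j M, (1 - μ i)) ≤ 1 :=
        Finset.prod_le_one (fun i _ => hm i) (fun i _ => hm1 i)
      calc (∏ i ∈ range j, (1 - μ i)) * ∏ i ∈ Ico j M, (1 - μ i)
          ≤ (∏ i ∈ range j, (1 - μ i)) * 1 :=
            mul_le_mul_of_nonneg_left h1 (hPm _)
        _ = ∏ i ∈ range j, (1 - μ i) := mul_one _
    rw [mul_assoc, Finset.prod_mul_distrib]
    apply mul_le_mul_of_nonneg_left _ (hν j).1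
    exact mul_le_mul_of_nonneg_left hsplit (hPq j)
  · apply Finset.sum_le_sum
    intro j hj
    apply mul_le_mul_of_nonneg_left _ (hν j).1
    rw [Finset.prod_mul_distrib]
    calc (∏ i ∈ range j, (1 - α i - ν i)) * ∏ i ∈ range j, (1 - μ i)
        ≤ (∏ i ∈ range j, (1 - α i - ν i)) * 1 :=
          mul_le_mul_of_nonneg_left
            (Finset.prod_le_one (fun i _ => hm i) (fun i _ => hm1 i)) (hPq j)
      _ = _ := mul_one _
end

section
/- Let M ≥ 1 and let α_i, ν_i, μ_i ∈ [0,1] with α_i + ν_i ≤ 1 for all i. With μ defined by ∑_{j=1}^{M} μ_j ∏_{i=1}^{j-1}(1-μ_i) = μ, and α, ν defined as aggregate daily recovery and death probabilities with ∏_{i=1}^{M}(1-α_i-ν_i) = 1-α-ν, the interleaved transfer probability satisfies μ(1-α-ν) ≤ ∑_{j=1}^{M} μ_j (1-α_j-ν_j) ∏_{i=1}^{j-1}(1-α_i-ν_i)(1-μ_i) ≤ μ. -/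
open Finset

/-- Sandwich bound for the interleaved transfer probability:
`μ(1-α-ν) ≤ ∑ μ_j (1-α_j-ν_j) ∏_{i<j}(1-α_i-ν_i)(1-μ_i) ≤ μ`, where
`μ = ∑ μ_j ∏_{i<j}(1-μ_i)` and `1-α-ν = ∏_{i<M}(1-α_i-ν_i)`. -/
theorem stmt2 (M : ℕ) (hM : 1 ≤ M) (α ν μ : ℕ → ℝ)
    (hα : ∀ i, 0 ≤ α i ∧ α i ≤ 1) (hν : ∀ i, 0 ≤ ν i ∧ ν i ≤ 1)
    (hμ : ∀ i, 0 ≤ μ i ∧ μ i ≤ 1) (hαν : ∀ i, α i + ν i ≤ 1) :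
    (∑ j ∈ range M, μ j * ∏ i ∈ range j, (1 - μ i)) *
        (∏ i ∈ range M, (1 - α i - ν i)) ≤
      ∑ j ∈ range M, μ j * (1 - α j - ν j) *
        ∏ i ∈ range j, (1 - α i - ν i) * (1 - μ i) ∧
    ∑ j ∈ range M, μ j * (1 - α j - ν j) *
        ∏ i ∈ range j, (1 - α i - ν i) * (1 - μ i) ≤
      ∑ j ∈ range M, μ j * ∏ i ∈ range j, (1 - μ i) := by
  have ha0 : ∀ i, 0 ≤ 1 - α i - ν i := fun i => by linarith [hαν i]
  have ha1 : ∀ i, 1 - α i - ν i ≤ 1 := fun i => by linarith [(hα i).1, (hν i).1]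
  have hb0 : ∀ i, 0 ≤ 1 - μ i := fun i => by linarith [(hμ i).2]
  have hb1 : ∀ i, 1 - μ i ≤ 1 := fun i => by linarith [(hμ i).1]
  have hprodb0 : ∀ j, 0 ≤ ∏ i ∈ range j, (1 - μ i) :=
    fun j => Finset.prod_nonneg fun i _ => hb0 i
  have hproda0 : ∀ s : Finset ℕ, 0 ≤ ∏ i ∈ s, (1 - α i - ν i) :=
    fun s => Finset.prod_nonneg fun i _ => ha0 i
  constructor
  · rw [Finset.sum_mul]
    apply Finset.sum_le_sum
    intro j hj
    rw [Finset.mem_range] at hj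
    rw [Finset.prod_mul_distrib]
    have key : (∏ i ∈ range M, (1 - α i - ν i)) ≤
        (1 - α j - ν j) * ∏ i ∈ range j, (1 - α i - ν i) := by
      have hsplit : (∏ i ∈ range (j+1), (1 - α i - ν i)) *
          ∏ i ∈ Ico (j+1) M, (1 - α i - ν i) =
          ∏ i ∈ range M, (1 - α i - ν i) :=
        Finset.prod_range_mul_prod_Ico _ hj
      have h1 : (∏ i ∈ Ico (j+1) M, (1 - α i - ν i)) ≤ 1 :=
        Finset.prod_le_one (fun i _ => ha0 i) (fun i _ => ha1 i)
      have h0 : 0 ≤ ∏ i ∈ Ico (j+1) M, (1 - α i - ν i) := hproda0 _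
      rw [← hsplit, Finset.prod_range_succ]
      nlinarith [mul_le_of_le_one_right (mul_nonneg (hproda0 (range j)) (ha0 j)) h1]
    calc μ j * (∏ i ∈ range j, (1 - μ i)) * ∏ i ∈ range M, (1 - α i - ν i)
        ≤ μ j * (∏ i ∈ range j, (1 - μ i)) *
          ((1 - α j - ν j) * ∏ i ∈ range j, (1 - α i - ν i)) := by
          apply mul_le_mul_of_nonneg_left key
          exact mul_nonneg (hμ j).1 (hprodb0 j)
      _ = μ j * (1 - α j - ν j) *
          ((∏ i ∈ range j, (1 - α i - ν i)) * ∏ i ∈ range j, (1 - μ i)) := by ring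
  · apply Finset.sum_le_sum
    intro j hj
    rw [Finset.prod_mul_distrib]
    have h1 : (∏ i ∈ range j, (1 - α i - ν i)) ≤ 1 :=
      Finset.prod_le_one (fun i _ => ha0 i) (fun i _ => ha1 i)
    have hA : (1 - α j - ν j) * (∏ i ∈ range j, (1 - α i - ν i)) ≤ 1 :=
      mul_le_one₀ (ha1 j) (hproda0 _) h1
    nlinarith [mul_nonneg (hμ j).1 (hprodb0 j), hA]
end
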